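/- arXiv:0809.3724 — 2 statements merged into one kernel-verified Lean document; each statement's English description precedes it below -/
import Mathlib

section
/- Let (G,a) be a weighted graph such that every edge is incident to a vertex of weight 1. Then the subdefect a(V(G)) - 2β(G,a) equals the defect a(V(G)) - 2α(G,a). -/
open Finset

def IsStable {V : Type} (G : SimpleGraph V) (S : Finset V) : Prop :=
  ∀ u ∈ S, ∀ v ∈ S, ¬ G.Adj u v

open Classical in
/-- Number of edges of `G` with both endpoints in `S`. -/
noncomputable def edgesIn {V : Type} [Fintype V] (G : SimpleGraph V) (S : Finset V) : ℕ :=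
  (Set.toFinite {e ∈ G.edgeSet | ∀ v ∈ e, v ∈ S}).toFinset.card

open Classical in
/-- Maximum weight of a stable set. -/
noncomputable def alphaW {V : Type} [Fintype V] (G : SimpleGraph V) (a : V → ℤ) : ℤ :=
  Finset.sup' (Finset.univ.powerset.filter fun S => IsStable G S)
    ⟨∅, by simp [IsStable]⟩ (fun S => ∑ v ∈ S, a v)

/-- Maximum worth of a vertex subset. -/
noncomputable def betaW {V : Type} [Fintype V] (G : SimpleGraph V) (a : V → ℤ) : ℤ :=
  Finset.sup' Finset.univ.powerset ⟨∅, by simp⟩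
    (fun S => (∑ v ∈ S, a v) - (edgesIn G S : ℤ))

open Classical in
lemma mem_edgesInFinset {V : Type} [Fintype V] (G : SimpleGraph V) (S : Finset V)
    (e : Sym2 V) :
    e ∈ (Set.toFinite {e ∈ G.edgeSet | ∀ v ∈ e, v ∈ S}).toFinset ↔
      e ∈ G.edgeSet ∧ ∀ v ∈ e, v ∈ S := by
  simp [Set.Finite.mem_toFinset]

open Classical in
lemma edgesIn_eq_zero_of_stable {V : Type} [Fintype V] (G : SimpleGraph V)
    (S : Finset V) (hS : IsStable G S) : edgesIn G S = 0 := by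
  rw [edgesIn, Finset.card_eq_zero, Finset.eq_empty_iff_forall_notMem]
  intro e he
  rw [mem_edgesInFinset] at he
  induction e with
  | h u v =>
    exact hS u (he.2 u (by simp)) v (he.2 v (by simp))
      (G.mem_edgeSet.mp he.1)

open Classical in
lemma key_lemma {V : Type} [Fintype V] (G : SimpleGraph V) (a : V → ℤ)
    (ha : ∀ v, 1 ≤ a v)
    (hcov : ∀ e ∈ G.edgeSet, ∃ v ∈ e, a v = 1) :
    ∀ n (S : Finset V), edgesIn G S = n →
      (∑ v ∈ S, a v) - (edgesIn G S : ℤ) ≤ alphaW G a := by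
  intro n
  induction n using Nat.strong_induction_on with
  | _ n ih =>
    intro S hn
    by_cases hS : IsStable G S
    · rw [edgesIn_eq_zero_of_stable G S hS]
      simp only [Nat.cast_zero, sub_zero]
      exact Finset.le_sup' (f := fun S => ∑ v ∈ S, a v)
        (by simp [Finset.mem_filter, hS])
    · -- find an edge inside S
      simp only [IsStable, not_forall] at hS
      obtain ⟨u, hu, v, hv, hadj⟩ := hS
      have he : s(u, v) ∈ G.edgeSet := G.mem_edgeSet.mpr (not_not.mp hadj)
      obtain ⟨w, hw, haw⟩ := hcov _ he
      have hwS : w ∈ S := by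
        rcases Sym2.mem_iff.mp hw with h | h <;> subst h <;> assumption
      set S' := S.erase w with hS'
      have hsub : ∀ e, e ∈ (Set.toFinite {e ∈ G.edgeSet | ∀ x ∈ e, x ∈ S'}).toFinset →
          e ∈ (Set.toFinite {e ∈ G.edgeSet | ∀ x ∈ e, x ∈ S}).toFinset := by
        intro e heM
        rw [mem_edgesInFinset] at heM ⊢
        exact ⟨heM.1, fun x hx => Finset.mem_of_mem_erase (heM.2 x hx)⟩
      have hmem : s(u, v) ∈ (Set.toFinite {e ∈ G.edgeSet | ∀ x ∈ e, x ∈ S}).toFinset := by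
        rw [mem_edgesInFinset]
        refine ⟨he, fun x hx => ?_⟩
        rcases Sym2.mem_iff.mp hx with h | h <;> subst h <;> assumption
      have hnmem : s(u, v) ∉ (Set.toFinite {e ∈ G.edgeSet | ∀ x ∈ e, x ∈ S'}).toFinset := by
        rw [mem_edgesInFinset]
        intro h
        exact (Finset.notMem_erase w S) (h.2 w hw)
      have hlt : edgesIn G S' < edgesIn G S := by
        apply Finset.card_lt_card
        exact ⟨fun e he => hsub e he, fun h => hnmem (h hmem)⟩
      have hsum : (∑ x ∈ S, a x) = (∑ x ∈ S', a x) + 1 := by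
        rw [hS', ← Finset.sum_erase_add S a hwS, haw]
      have hIH := ih (edgesIn G S') (hn ▸ hlt) S' rfl
      have : (∑ v ∈ S, a v) - (edgesIn G S : ℤ) ≤
          (∑ v ∈ S', a v) - (edgesIn G S' : ℤ) := by
        rw [hsum]
        have : (edgesIn G S' : ℤ) + 1 ≤ (edgesIn G S : ℤ) := by exact_mod_cast hlt
        linarith
      linarith

theorem subdefect_eq_defect_of_unit_cover {V : Type} [Fintype V]
    (G : SimpleGraph V) (a : V → ℤ) (ha : ∀ v, 1 ≤ a v)
    (hcov : ∀ e ∈ G.edgeSet, ∃ v ∈ e, a v = 1) :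
    (∑ v, a v) - 2 * betaW G a = (∑ v, a v) - 2 * alphaW G a := by
  classical
  have h1 : betaW G a ≤ alphaW G a := by
    apply Finset.sup'_le
    intro S _
    exact key_lemma G a ha hcov (edgesIn G S) S rfl
  have h2 : alphaW G a ≤ betaW G a := by
    apply Finset.sup'_le
    intro S hS
    rw [Finset.mem_filter] at hS
    have := edgesIn_eq_zero_of_stable G S hS.2
    calc (∑ v ∈ S, a v) = (∑ v ∈ S, a v) - (edgesIn G S : ℤ) := by
          rw [this]; simp
      _ ≤ betaW G a := by
          rw [betaW]
          exact Finset.le_sup' (f := fun S => (∑ v ∈ S, a v) - (edgesIn G S : ℤ)) (by simp)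
  rw [le_antisymm h1 h2]
end

section
/- Let G be α-critical with defect δ, and let T_1, ..., T_k be maximum worth sets of G (unit weights) such that every vertex of G belongs to some T_i and lies outside some T_j. Then δ ≥ Σ_{i=1}^{k} ‖T_i‖ - Σ_{j=3}^{k} ‖X_j‖, where X_j = ((T_1 ∪ ⋯ ∪ T_{j-1}) ∩ T_j) ∪ ((T_1 ∩ ⋯ ∩ T_{j-1}) \ T_j). -/
open Finset

open Classical in
noncomputable def alphaNat {V : Type} [Fintype V] (G : SimpleGraph V) : ℕ :=
  Finset.univ.sup fun S : Finset V => if IsStable G S then S.card else 0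

def AlphaCritical {V : Type} [Fintype V] (G : SimpleGraph V) : Prop :=
  ∀ e ∈ G.edgeSet, alphaNat G < alphaNat (G.deleteEdges {e})

/-- `T` is a set of maximum worth in `G` with unit weights. -/
def IsMaxWorth {V : Type} [Fintype V] (G : SimpleGraph V) (T : Finset V) : Prop :=
  ∀ S : Finset V, (S.card : ℤ) - edgesIn G S ≤ (T.card : ℤ) - edgesIn G T

open Classical in
/-- `Xset T j = ((T 0 ∪ ⋯ ∪ T (j-1)) ∩ T j) ∪ ((T 0 ∩ ⋯ ∩ T (j-1)) \ T j)`. -/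
noncomputable def Xset {V : Type} [Fintype V] {k : ℕ} (T : Fin k → Finset V) (j : Fin k) :
    Finset V :=
  ((Finset.univ.filter fun v => ∃ i < j, v ∈ T i) ∩ T j) ∪
    ((Finset.univ.filter fun v => ∀ i < j, v ∈ T i) \ T j)

section Aux

variable {V : Type} [Fintype V] (G : SimpleGraph V)

lemma edgesIn_stable {S : Finset V} (h : IsStable G S) : edgesIn G S = 0 := by
  unfold edgesIn
  rw [Finset.card_eq_zero, Set.Finite.toFinset_eq_empty]
  ext e
  simp only [Set.mem_setOf_eq, Set.mem_empty_iff_false, iff_false, not_and]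
  intro he hm
  induction e with
  | _ a b =>
    exact h a (hm a (Sym2.mem_mk_left a b)) b (hm b (Sym2.mem_mk_right a b)) he

lemma stable_card_le_alpha {S : Finset V} (h : IsStable G S) : S.card ≤ alphaNat G := by
  classical
  refine le_trans ?_ (Finset.le_sup (f := fun S : Finset V => if IsStable G S then S.card else 0)
    (Finset.mem_univ S))
  · show S.card ≤ if IsStable G S then S.card else 0
    rw [if_pos h]

lemma edgesIn_erase_lt [DecidableEq V] {S : Finset V} {u v : V} (hu : u ∈ S) (hv : v ∈ S)
    (h : G.Adj u v) : edgesIn G (S.erase u) < edgesIn G S := by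
  unfold edgesIn
  apply Finset.card_lt_card
  have hsub : (Set.toFinite {e ∈ G.edgeSet | ∀ x ∈ e, x ∈ S.erase u}).toFinset ⊆
      (Set.toFinite {e ∈ G.edgeSet | ∀ x ∈ e, x ∈ S}).toFinset := by
    intro e he
    rw [Set.Finite.mem_toFinset] at he ⊢
    exact ⟨he.1, fun x hx => Finset.mem_of_mem_erase (he.2 x hx)⟩
  rw [Finset.ssubset_iff_of_subset hsub]
  refine ⟨s(u, v), ?_, ?_⟩
  · rw [Set.Finite.mem_toFinset]
    refine ⟨h, fun x hx => ?_⟩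
    rw [Sym2.mem_iff] at hx
    rcases hx with rfl | rfl
    · exact hu
    · exact hv
  · rw [Set.Finite.mem_toFinset]
    intro hmem
    exact (Finset.notMem_erase u S) (hmem.2 u (Sym2.mem_mk_left u v))

lemma worth_le_alpha (S : Finset V) : (S.card : ℤ) - edgesIn G S ≤ alphaNat G := by
  classical
  suffices h : ∀ n : ℕ, ∀ S : Finset V, edgesIn G S ≤ n →
      (S.card : ℤ) - edgesIn G S ≤ alphaNat G from h (edgesIn G S) S le_rfl
  intro n
  induction n with
  | zero =>
    intro S hn
    by_cases hst : IsStable G S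
    · have h1 := stable_card_le_alpha G hst
      have h2 : (0:ℤ) ≤ (edgesIn G S : ℤ) := Int.natCast_nonneg _
      omega
    · exfalso
      simp only [IsStable, not_forall] at hst
      obtain ⟨a, ha, b, hb, hab⟩ := hst
      rw [not_not] at hab
      have := edgesIn_erase_lt G ha hb hab
      omega
  | succ n ih =>
    intro S hn
    by_cases hst : IsStable G S
    · have h1 := stable_card_le_alpha G hst
      have h2 : (0:ℤ) ≤ (edgesIn G S : ℤ) := Int.natCast_nonneg _
      omega
    · simp only [IsStable, not_forall] at hst
      obtain ⟨a, ha, b, hb, hab⟩ := hst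
      rw [not_not] at hab
      have hlt := edgesIn_erase_lt G ha hb hab
      have hIH := ih (S.erase a) (by omega)
      have hc : (S.erase a).card = S.card - 1 := Finset.card_erase_of_mem ha
      have hcpos : 1 ≤ S.card := Finset.card_pos.mpr ⟨a, ha⟩
      omega

lemma alpha_le_worth {T : Finset V} (hT : IsMaxWorth G T) :
    (alphaNat G : ℤ) ≤ (T.card : ℤ) - edgesIn G T := by
  classical
  obtain ⟨S, -, hS⟩ := Finset.exists_mem_eq_sup (Finset.univ : Finset (Finset V))
    ⟨∅, Finset.mem_univ ∅⟩ (fun S : Finset V => if IsStable G S then S.card else 0)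
  by_cases hst : IsStable G S
  · rw [if_pos hst] at hS
    have h1 := hT S
    rw [edgesIn_stable G hst] at h1
    have hS' : alphaNat G = S.card := hS
    omega
  · rw [if_neg hst] at hS
    have hS' : alphaNat G = 0 := hS
    have h1 := hT ∅
    have he : edgesIn G ∅ = 0 := edgesIn_stable G (by intro u hu; simp at hu)
    rw [he] at h1
    simp only [Finset.card_empty, Nat.cast_zero, sub_zero] at h1
    omega

end Aux

open Classical in
noncomputable def Ffun (a : ℕ → ℤ) (N : ℕ) : ℤ := if ∃ i < N, a i = 1 then 1 else 0
open Classical in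
noncomputable def Gfun (a : ℕ → ℤ) (N : ℕ) : ℤ := if ∀ i < N, a i = 1 then 1 else 0

lemma telescope_count {k : ℕ} (hk : 2 ≤ k) (a : ℕ → ℤ)
    (ha : ∀ i, a i = 0 ∨ a i = 1) (hex : ∃ j < k, a j = 0)
    (x : ℕ → ℤ)
    (hx : ∀ j, 2 ≤ j → j < k →
      x j = (if (a j = 1 ∧ ∃ i < j, a i = 1) ∨ (a j = 0 ∧ ∀ i < j, a i = 1) then 1 else 0)) :
    (∑ i ∈ Finset.range k, a i) ≤ (∑ j ∈ Finset.Ico 2 k, x j) + 1 := by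
  classical
  have key : ∀ N, 2 ≤ N → N ≤ k →
      (∑ j ∈ Finset.Ico 2 N, x j) + Ffun a N + Gfun a N =
        (∑ j ∈ Finset.Ico 2 N, a j) + Ffun a 2 + Gfun a 2 := by
    intro N hN2
    induction N, hN2 using Nat.le_induction with
    | base => intro _; simp
    | succ N hN2 ih =>
      intro hNk
      have hNk' : N < k := hNk
      have ihe := ih (le_of_lt hNk')
      have hsum : ∑ j ∈ Finset.Ico 2 (N + 1), x j = (∑ j ∈ Finset.Ico 2 N, x j) + x N :=
        Finset.sum_Ico_succ_top hN2 x
      have hsuma : ∑ j ∈ Finset.Ico 2 (N + 1), a j = (∑ j ∈ Finset.Ico 2 N, a j) + a N :=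
        Finset.sum_Ico_succ_top hN2 a
      have hxN := hx N hN2 hNk'
      rcases ha N with h0 | h1
      · have hxN' : x N = Gfun a N := by
          rw [hxN, Gfun]
          by_cases hall : ∀ i < N, a i = 1
          · rw [if_pos (Or.inr ⟨h0, hall⟩), if_pos hall]
          · rw [if_neg ?_, if_neg hall]
            rintro (⟨h, -⟩ | ⟨-, h⟩)
            · omega
            · exact hall h
        have hF : Ffun a (N + 1) = Ffun a N := by
          unfold Ffun
          congr 1
          simp only [eq_iff_iff]
          constructor
          · rintro ⟨i, hi, hai⟩
            refine ⟨i, ?_, hai⟩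
            rcases Nat.lt_succ_iff_lt_or_eq.mp hi with h | rfl
            · exact h
            · omega
          · rintro ⟨i, hi, hai⟩; exact ⟨i, Nat.lt_succ_of_lt hi, hai⟩
        have hG : Gfun a (N + 1) = 0 := by
          unfold Gfun
          rw [if_neg]
          intro hall
          have := hall N (Nat.lt_succ_self N)
          omega
        rw [hsum, hsuma, hxN', hF, hG]
        linarith [ihe]
      · have hxN' : x N = Ffun a N := by
          rw [hxN, Ffun]
          by_cases hexx : ∃ i < N, a i = 1
          · rw [if_pos (Or.inl ⟨h1, hexx⟩), if_pos hexx]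
          · rw [if_neg ?_, if_neg hexx]
            rintro (⟨-, h⟩ | ⟨h, -⟩)
            · exact hexx h
            · omega
        have hF : Ffun a (N + 1) = 1 := by
          unfold Ffun
          rw [if_pos ⟨N, Nat.lt_succ_self N, h1⟩]
        have hG : Gfun a (N + 1) = Gfun a N := by
          unfold Gfun
          congr 1
          simp only [eq_iff_iff]
          constructor
          · intro hall i hi; exact hall i (Nat.lt_succ_of_lt hi)
          · intro hall i hi
            rcases Nat.lt_succ_iff_lt_or_eq.mp hi with h | rfl
            · exact hall i h
            · exact h1
        rw [hsum, hsuma, hxN', hF, hG]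
        linarith [ihe]
  have hkey := key k hk le_rfl
  have hGk : Gfun a k = 0 := by
    unfold Gfun
    rw [if_neg]
    intro hall
    obtain ⟨j, hj, hj0⟩ := hex
    have := hall j hj
    omega
  have hFk : Ffun a k ≤ 1 := by unfold Ffun; split <;> norm_num
  have hFk0 : 0 ≤ Ffun a k := by unfold Ffun; split <;> norm_num
  have hF2G2 : Ffun a 2 + Gfun a 2 = a 0 + a 1 := by
    have he2 : (∃ i < 2, a i = 1) ↔ (a 0 = 1 ∨ a 1 = 1) := by
      constructor
      · rintro ⟨i, hi, hai⟩
        interval_cases i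
        · exact Or.inl hai
        · exact Or.inr hai
      · rintro (h | h)
        · exact ⟨0, by omega, h⟩
        · exact ⟨1, by omega, h⟩
    have ha2 : (∀ i < 2, a i = 1) ↔ (a 0 = 1 ∧ a 1 = 1) := by
      constructor
      · intro h; exact ⟨h 0 (by omega), h 1 (by omega)⟩
      · rintro ⟨h0, h1⟩ i hi
        interval_cases i
        · exact h0
        · exact h1
    unfold Ffun Gfun
    rw [if_congr he2 rfl rfl, if_congr ha2 rfl rfl]
    rcases ha 0 with h0 | h0 <;> rcases ha 1 with h1 | h1 <;>
      simp [h0, h1]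
  have hsplit : (∑ i ∈ Finset.range k, a i) = a 0 + a 1 + ∑ j ∈ Finset.Ico 2 k, a j := by
    rw [Finset.range_eq_Ico, ← Finset.sum_Ico_consecutive a (by omega : 0 ≤ 2) hk]
    congr 1
    rw [← Finset.range_eq_Ico]
    simp [Finset.sum_range_succ]
  linarith [hkey, hGk, hFk, hFk0, hF2G2, hsplit]

open Classical in
lemma per_vertex {V : Type} [Fintype V] {k : ℕ} (hk : 2 ≤ k) (T : Fin k → Finset V) (v : V)
    (hout : ∃ j : Fin k, v ∉ T j) :
    (∑ i : Fin k, (if v ∈ T i then (1:ℤ) else 0)) ≤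
      (∑ j ∈ Finset.univ.filter (fun j : Fin k => 2 ≤ (j : ℕ)),
        (if v ∈ Xset T j then (1:ℤ) else 0)) + 1 := by
  classical
  set a : ℕ → ℤ := fun i => if h : i < k then (if v ∈ T ⟨i, h⟩ then (1:ℤ) else 0) else 0
    with ha_def
  set x : ℕ → ℤ := fun j => if h : j < k then (if v ∈ Xset T ⟨j, h⟩ then (1:ℤ) else 0) else 0
    with hx_def
  have e1 : ∀ i : Fin k, a i.val = (if v ∈ T i then (1:ℤ) else 0) := by
    intro i
    simp only [ha_def]
    rw [dif_pos i.isLt]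
  have e2 : ∀ j : Fin k, x j.val = (if v ∈ Xset T j then (1:ℤ) else 0) := by
    intro j
    simp only [hx_def]
    rw [dif_pos j.isLt]
  have hmm : ∀ (n : ℕ) (h : n < k), (a n = 1 ↔ v ∈ T ⟨n, h⟩) ∧ (a n = 0 ↔ v ∉ T ⟨n, h⟩) := by
    intro n h
    simp only [ha_def]
    rw [dif_pos h]
    by_cases hv : v ∈ T ⟨n, h⟩ <;> simp [hv]
  have ha : ∀ i, a i = 0 ∨ a i = 1 := by
    intro i
    simp only [ha_def]
    split_ifs <;> simp
  have hex : ∃ j < k, a j = 0 := by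
    obtain ⟨j, hj⟩ := hout
    exact ⟨j.val, j.isLt, by rw [e1 j, if_neg hj]⟩
  have hx : ∀ j, 2 ≤ j → j < k →
      x j = (if (a j = 1 ∧ ∃ i < j, a i = 1) ∨ (a j = 0 ∧ ∀ i < j, a i = 1) then 1 else 0) := by
    intro j h2 hjk
    simp only [hx_def]
    rw [dif_pos hjk]
    refine if_congr ?_ rfl rfl
    rw [Xset]
    simp only [Finset.mem_union, Finset.mem_inter, Finset.mem_filter, Finset.mem_sdiff,
      Finset.mem_univ, true_and]
    constructor
    · rintro (⟨⟨i, hi, hvi⟩, hvj⟩ | ⟨hall, hvj⟩)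
      · left
        refine ⟨((hmm j hjk).1).mpr hvj, i.val, ?_, ((hmm i.val i.isLt).1).mpr ?_⟩
        · exact hi
        · simpa [Fin.eta] using hvi
      · right
        refine ⟨((hmm j hjk).2).mpr hvj, fun n hn => ((hmm n (lt_trans hn hjk)).1).mpr ?_⟩
        exact hall ⟨n, lt_trans hn hjk⟩ hn
    · rintro (⟨haj, i, hi, hai⟩ | ⟨haj, hall⟩)
      · left
        exact ⟨⟨⟨i, lt_trans hi hjk⟩, hi, ((hmm i (lt_trans hi hjk)).1).mp hai⟩,
          ((hmm j hjk).1).mp haj⟩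
      · right
        refine ⟨fun i hi => ?_, ((hmm j hjk).2).mp haj⟩
        have h3 := ((hmm i.val i.isLt).1).mp (hall i.val hi)
        simpa [Fin.eta] using h3
  calc ∑ i : Fin k, (if v ∈ T i then (1:ℤ) else 0)
      = ∑ i : Fin k, a i.val := Finset.sum_congr rfl (fun i _ => (e1 i).symm)
    _ = ∑ i ∈ Finset.range k, a i := Fin.sum_univ_eq_sum_range a k
    _ ≤ (∑ j ∈ Finset.Ico 2 k, x j) + 1 := telescope_count hk a ha hex x hx
    _ = (∑ j ∈ Finset.univ.filter (fun j : Fin k => 2 ≤ (j : ℕ)),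
        (if v ∈ Xset T j then (1:ℤ) else 0)) + 1 := by
      congr 1
      have hIco : Finset.Ico 2 k = (Finset.range k).filter (fun j => 2 ≤ j) := by
        ext n
        simp only [Finset.mem_Ico, Finset.mem_range, Finset.mem_filter]
        omega
      rw [hIco, Finset.sum_filter,
        ← Fin.sum_univ_eq_sum_range (fun n => if 2 ≤ n then x n else 0) k, Finset.sum_filter]
      exact Finset.sum_congr rfl (fun j _ => by rw [e2 j])

theorem defect_lower_bound_from_max_worth_sets {V : Type} [Fintype V]
    (G : SimpleGraph V) (hG : AlphaCritical G) {k : ℕ} (T : Fin k → Finset V)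
    (hT : ∀ i, IsMaxWorth G (T i))
    (hcov : ∀ u : V, (∃ i, u ∈ T i) ∧ (∃ j, u ∉ T j)) :
    (∑ i : Fin k, (edgesIn G (T i) : ℤ)) -
        ∑ j ∈ Finset.univ.filter (fun j : Fin k => 2 ≤ (j : ℕ)),
          (edgesIn G (Xset T j) : ℤ) ≤
      (Fintype.card V : ℤ) - 2 * alphaNat G := by
  classical
  by_cases hk : 2 ≤ k
  · -- main case
    have hW : ∀ S : Finset V, (S.card : ℤ) - edgesIn G S ≤ (alphaNat G : ℤ) := worth_le_alpha G
    have hTw : ∀ i, ((T i).card : ℤ) - edgesIn G (T i) = (alphaNat G : ℤ) := fun i =>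
      le_antisymm (hW _) (alpha_le_worth G (hT i))
    have hcard : ∀ S : Finset V, (S.card : ℤ) = ∑ v : V, (if v ∈ S then (1:ℤ) else 0) := by
      intro S
      simp [Finset.sum_boole, Finset.filter_univ_mem]
    have hpv := fun v : V => per_vertex hk T v (hcov v).2
    have hcount : (∑ i : Fin k, ((T i).card : ℤ)) ≤
        (∑ j ∈ Finset.univ.filter (fun j : Fin k => 2 ≤ (j : ℕ)), ((Xset T j).card : ℤ)) +
          Fintype.card V := by
      calc (∑ i : Fin k, ((T i).card : ℤ))
          = ∑ i : Fin k, ∑ v : V, (if v ∈ T i then (1:ℤ) else 0) :=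
            Finset.sum_congr rfl (fun i _ => hcard _)
        _ = ∑ v : V, ∑ i : Fin k, (if v ∈ T i then (1:ℤ) else 0) := Finset.sum_comm
        _ ≤ ∑ v : V, ((∑ j ∈ Finset.univ.filter (fun j : Fin k => 2 ≤ (j : ℕ)),
              (if v ∈ Xset T j then (1:ℤ) else 0)) + 1) :=
            Finset.sum_le_sum (fun v _ => hpv v)
        _ = (∑ v : V, ∑ j ∈ Finset.univ.filter (fun j : Fin k => 2 ≤ (j : ℕ)),
              (if v ∈ Xset T j then (1:ℤ) else 0)) + Fintype.card V := by
            rw [Finset.sum_add_distrib]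
            simp [Finset.card_univ]
        _ = (∑ j ∈ Finset.univ.filter (fun j : Fin k => 2 ≤ (j : ℕ)),
              ∑ v : V, (if v ∈ Xset T j then (1:ℤ) else 0)) + Fintype.card V := by
            rw [Finset.sum_comm]
        _ = (∑ j ∈ Finset.univ.filter (fun j : Fin k => 2 ≤ (j : ℕ)),
              ((Xset T j).card : ℤ)) + Fintype.card V := by
            congr 1
            exact Finset.sum_congr rfl (fun j _ => (hcard _).symm)
    have hfc : ((Finset.univ.filter (fun j : Fin k => 2 ≤ (j : ℕ))).card : ℤ) = (k : ℤ) - 2 := by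
      have hone : (Finset.univ.filter (fun j : Fin k => 2 ≤ (j : ℕ))).card +
          (Finset.univ.filter (fun j : Fin k => ¬ 2 ≤ (j : ℕ))).card = k := by
        rw [Finset.card_filter_add_card_filter_not]
        simp
      have h01 : (Finset.univ.filter (fun j : Fin k => ¬ 2 ≤ (j : ℕ))) =
          {(⟨0, by omega⟩ : Fin k), ⟨1, by omega⟩} := by
        ext j
        simp only [Finset.mem_filter, Finset.mem_univ, true_and, Finset.mem_insert,
          Finset.mem_singleton, Fin.ext_iff]
        omega
      have h2 : ({(⟨0, by omega⟩ : Fin k), ⟨1, by omega⟩} : Finset (Fin k)).card = 2 := by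
        rw [Finset.card_insert_of_notMem (by simp [Fin.ext_iff]), Finset.card_singleton]
      rw [h01, h2] at hone
      omega
    have h1 : (∑ i : Fin k, (edgesIn G (T i) : ℤ)) =
        (∑ i : Fin k, ((T i).card : ℤ)) - (k : ℤ) * alphaNat G := by
      have he : ∀ i : Fin k, (edgesIn G (T i) : ℤ) = ((T i).card : ℤ) - alphaNat G := fun i => by
        linarith [hTw i]
      rw [Finset.sum_congr rfl (fun i _ => he i), Finset.sum_sub_distrib]
      simp [Finset.card_univ, mul_comm]
    have h2 : (∑ j ∈ Finset.univ.filter (fun j : Fin k => 2 ≤ (j : ℕ)), ((Xset T j).card : ℤ)) -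
        ((k : ℤ) - 2) * alphaNat G ≤
          ∑ j ∈ Finset.univ.filter (fun j : Fin k => 2 ≤ (j : ℕ)),
            (edgesIn G (Xset T j) : ℤ) := by
      have hXw : ∀ j ∈ Finset.univ.filter (fun j : Fin k => 2 ≤ (j : ℕ)),
          ((Xset T j).card : ℤ) - (alphaNat G : ℤ) ≤ edgesIn G (Xset T j) := fun j _ => by
        linarith [hW (Xset T j)]
      have hs := Finset.sum_le_sum hXw
      rw [Finset.sum_sub_distrib, Finset.sum_const] at hs
      rw [nsmul_eq_mul, hfc] at hs
      linarith [hs]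
    linarith [hcount, h1, h2]
  · -- degenerate case: V is empty
    have hVempty : IsEmpty V := by
      by_contra h
      rw [not_isEmpty_iff] at h
      obtain ⟨u⟩ := h
      obtain ⟨⟨i, hi⟩, ⟨j, hj⟩⟩ := hcov u
      have hij : i = j := by
        have h1 := i.isLt
        have h2 := j.isLt
        exact Fin.ext (by omega)
      exact hj (hij ▸ hi)
    have hE : ∀ S : Finset V, edgesIn G S = 0 := fun S =>
      edgesIn_stable G (fun u hu => hVempty.elim u)
    have hα : alphaNat G = 0 := by
      refine Nat.le_zero.mp ?_
      unfold alphaNat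
      refine Finset.sup_le (fun S _ => ?_)
      have hS : S = ∅ := Finset.eq_empty_of_isEmpty S
      subst hS
      split <;> simp
    have hcV : Fintype.card V = 0 := by
      haveI := hVempty
      exact Fintype.card_eq_zero
    simp [hE, hα, hcV]
end
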